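/- For every s ∈ H_1(K_b): θ_{1,b}(s) ∈ im(ψ_{b−1}) if and only if s ∈ im(φ_{b−1}). Consequently, the canonical ℤ/2-linear map H_1(K_b)/im(φ_{b−1}) → H_1(K̃_b)/im(ψ_{b−1}) induced by θ_{1,b} is injective. -/

import Mathlib

/-- An abstract simplicial complex on a vertex type `α`: a collection of nonempty
finite subsets of `α` closed under passing to nonempty subsets. -/
structure AbsSC (α : Type) where
  faces : Set (Finset α)
  not_empty_mem : ∅ ∉ faces
  down_closed : ∀ {s t : Finset α}, s ∈ faces → t ⊆ s → t.Nonempty → t ∈ faces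

namespace AbsSC

variable {α : Type}

/-- The vertex set of an abstract simplicial complex. -/
def vertexSet (K : AbsSC α) : Set α := {v | {v} ∈ K.faces}

/-- The type of `q`-simplices (faces with `q+1` vertices). -/
def simplices (K : AbsSC α) (q : ℕ) : Type :=
  {s : Finset α // s ∈ K.faces ∧ s.card = q + 1}

/-- The space of `q`-chains over `ℤ/2`: formal sums of `q`-simplices. -/
abbrev Chain (K : AbsSC α) (q : ℕ) : Type := K.simplices q →₀ ZMod 2

/-- The sum of the `q`-dimensional faces of a `(q+1)`-simplex. -/
noncomputable def faceChain (K : AbsSC α) (q : ℕ) (s : K.simplices (q + 1)) : K.Chain q :=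
  ∑ t ∈ (s.1.powersetCard (q + 1)).attach,
    Finsupp.single
      ⟨t.1, by
        obtain ⟨hsub, hcard⟩ := Finset.mem_powersetCard.mp t.2
        refine ⟨K.down_closed s.2.1 hsub ?_, hcard⟩
        rw [← Finset.card_pos, hcard]
        omega⟩
      (1 : ZMod 2)

/-- The boundary map `∂_{q+1} : C_{q+1}(K) → C_q(K)`, sending each `(q+1)`-simplex to
the sum of its `q`-dimensional faces. -/
noncomputable def boundary (K : AbsSC α) (q : ℕ) :
    K.Chain (q + 1) →ₗ[ZMod 2] K.Chain q :=
  Finsupp.lsum (ZMod 2) fun s => LinearMap.toSpanSingleton (ZMod 2) (K.Chain q) (K.faceChain q s)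

/-- The cycle subspace: `ker ∂_q` (all of `C_0` in degree `0`). -/
noncomputable def cycles (K : AbsSC α) : (q : ℕ) → Submodule (ZMod 2) (K.Chain q)
  | 0 => ⊤
  | q + 1 => LinearMap.ker (K.boundary q)

/-- The boundaries, viewed as a submodule of the cycles. -/
noncomputable def boundariesIn (K : AbsSC α) (q : ℕ) :
    Submodule (ZMod 2) (K.cycles q) :=
  Submodule.comap (K.cycles q).subtype (LinearMap.range (K.boundary q))

/-- The `q`-th simplicial homology over `ℤ/2`: `H_q(K) = ker ∂_q / im ∂_{q+1}`. -/
def Homology (K : AbsSC α) (q : ℕ) : Type :=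
  (K.cycles q) ⧸ (K.boundariesIn q)

noncomputable instance (K : AbsSC α) (q : ℕ) : AddCommGroup (K.Homology q) :=
  inferInstanceAs (AddCommGroup ((K.cycles q) ⧸ (K.boundariesIn q)))

noncomputable instance (K : AbsSC α) (q : ℕ) : Module (ZMod 2) (K.Homology q) :=
  inferInstanceAs (Module (ZMod 2) ((K.cycles q) ⧸ (K.boundariesIn q)))

/-- The homology class of a cycle. -/
noncomputable def hClass (K : AbsSC α) (q : ℕ) (c : K.Chain q) (hc : c ∈ K.cycles q) :
    K.Homology q :=
  Submodule.Quotient.mk ⟨c, hc⟩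

/-- The chain map induced by an inclusion of simplicial complexes. -/
noncomputable def chainMap (K L : AbsSC α) (h : K.faces ⊆ L.faces) (q : ℕ) :
    K.Chain q →ₗ[ZMod 2] L.Chain q :=
  Finsupp.lmapDomain (ZMod 2) (ZMod 2) fun s : K.simplices q =>
    (⟨s.1, h s.2.1, s.2.2⟩ : L.simplices q)

/-- `θ` is the map on `q`-th homology induced by the inclusion `K ⊆ L`: it sends the
class of every cycle `c` of `K` to the class of the image chain of `c` in `L`. -/
def InducedHom (K L : AbsSC α) (q : ℕ)
    (θ : K.Homology q →ₗ[ZMod 2] L.Homology q) : Prop :=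
  ∃ h : K.faces ⊆ L.faces,
    ∀ (c : K.Chain q) (hc : c ∈ K.cycles q),
      ∃ hc' : chainMap K L h q c ∈ L.cycles q,
        θ (K.hClass q c hc) = L.hClass q (chainMap K L h q c) hc'

end AbsSC

/-- The faces of the gluing stars `S = S_1 ⊔ ⋯ ⊔ S_k`: for each `j`, the vertex `{z j}`,
the vertices `{v}` for `v ∈ P j`, and the edges `{z j, v}` for `v ∈ P j`. -/
def starFaces {α : Type} [DecidableEq α] {k : ℕ} (P : Fin k → Set α) (z : Fin k → α) :
    Set (Finset α) :=
  {s | ∃ j : Fin k, s = {z j} ∨ ∃ v ∈ P j, s = {v} ∨ s = {z j, v}}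

section Tower

variable {W : ℕ → Type} [∀ i, AddCommGroup (W i)] [∀ i, Module (ZMod 2) (W i)]

/-- The composite `φ_{i,j} = φ_{j-1} ∘ ⋯ ∘ φ_i` of the connecting maps of a tower
(the identity when `i = j`). -/
noncomputable def comps (φ : ∀ i, W i →ₗ[ZMod 2] W (i + 1)) {i j : ℕ} (h : i ≤ j) :
    W i →ₗ[ZMod 2] W j :=
  Nat.leRecOn (C := fun m => W i →ₗ[ZMod 2] W m) h (fun {m} g => (φ m).comp g) LinearMap.id

/-- `s ∈ W b` has persistence interval `(b, d)` with finite death `d ∈ {b+1, …, n}`: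
`s ∉ im φ_{b-1}`, `φ_{b,d'}(s) ∉ im φ_{b-1,d'}` for all `b ≤ d' < d`, and
`φ_{b,d}(s) ∈ im φ_{b-1,d}`. -/
def HasPersIntervalFin (φ : ∀ i, W i →ₗ[ZMod 2] W (i + 1)) (n b d : ℕ) (s : W b) : Prop :=
  ∃ (_ : 1 ≤ b) (hbd : b < d) (_ : d ≤ n),
    s ∉ LinearMap.range (comps φ (Nat.sub_le b 1)) ∧
    (∀ (d' : ℕ) (hd' : b ≤ d'), d' < d →
      comps φ hd' s ∉ LinearMap.range (comps φ (Nat.le_trans (Nat.sub_le b 1) hd'))) ∧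
    comps φ (Nat.le_of_lt hbd) s ∈
      LinearMap.range (comps φ (Nat.le_trans (Nat.sub_le b 1) (Nat.le_of_lt hbd)))

/-- `s ∈ W b` has persistence interval `(b, ∞)`: `s ∉ im φ_{b-1}` and
`φ_{b,d'}(s) ∉ im φ_{b-1,d'}` for all `b ≤ d' ≤ n`. -/
def HasPersIntervalInf (φ : ∀ i, W i →ₗ[ZMod 2] W (i + 1)) (n b : ℕ) (s : W b) : Prop :=
  ∃ _ : 1 ≤ b,
    s ∉ LinearMap.range (comps φ (Nat.sub_le b 1)) ∧
    ∀ (d' : ℕ) (hd' : b ≤ d'), d' ≤ n →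
      comps φ hd' s ∉ LinearMap.range (comps φ (Nat.le_trans (Nat.sub_le b 1) hd'))

end Tower

/-! The gluing stars are 1-dimensional and each of their edges contains a new vertex `z j`.
Hence every 2-simplex of `K̃_b` lies in `K_b`, and an edge of `K̃_{b-1}` lying in `K_b` already
lies in `K_{b-1}`. If `θ [c] = ψ [d]`, the 2-chain bounding `d - c` in `K̃_b` therefore lives in
`K_b`, so `d` is supported in `K_b ∩ K̃_{b-1} ⊆ K_{b-1}` and is a cycle of `K_{b-1}` whose class
`φ` sends to `[c]`. The converse is the commuting square, and injectivity on the quotients is a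
restatement of the equivalence. -/

namespace AbsSC

variable {α : Type} {K L M : AbsSC α}

def simplicesMap (h : K.faces ⊆ L.faces) (q : ℕ) (s : K.simplices q) : L.simplices q :=
  ⟨s.1, h s.2.1, s.2.2⟩

lemma simplicesMap_injective (h : K.faces ⊆ L.faces) (q : ℕ) :
    Function.Injective (simplicesMap h q) :=
  fun _ _ hst => Subtype.ext (by simpa [simplicesMap] using congrArg Subtype.val hst)

lemma chainMap_single (h : K.faces ⊆ L.faces) (q : ℕ) (s : K.simplices q) (a : ZMod 2) :
    chainMap K L h q (Finsupp.single s a) = Finsupp.single (simplicesMap h q s) a :=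
  Finsupp.mapDomain_single

lemma chainMap_apply_simplicesMap (h : K.faces ⊆ L.faces) (q : ℕ) (c : K.Chain q)
    (s : K.simplices q) : chainMap K L h q c (simplicesMap h q s) = c s :=
  Finsupp.mapDomain_apply (simplicesMap_injective h q) c s

lemma chainMap_injective (h : K.faces ⊆ L.faces) (q : ℕ) :
    Function.Injective (chainMap K L h q) :=
  Finsupp.mapDomain_injective (simplicesMap_injective h q)

lemma chainMap_chainMap (hKL : K.faces ⊆ L.faces) (hLM : L.faces ⊆ M.faces) (q : ℕ)
    (c : K.Chain q) :
    chainMap L M hLM q (chainMap K L hKL q c) = chainMap K M (hKL.trans hLM) q c :=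
  Finsupp.mapDomain_comp.symm

lemma mem_range_chainMap_iff (h : K.faces ⊆ L.faces) (q : ℕ) (c : L.Chain q) :
    c ∈ LinearMap.range (chainMap K L h q) ↔ ∀ t : L.simplices q, t.1 ∉ K.faces → c t = 0 := by
  have hrange (t : L.simplices q) : t ∈ Set.range (simplicesMap h q) ↔ t.1 ∈ K.faces :=
    ⟨fun ⟨s, hs⟩ => hs ▸ s.2.1, fun ht => ⟨⟨t.1, ht, t.2.2⟩, rfl⟩⟩
  rw [LinearMap.mem_range, ← Set.mem_range]
  refine (Finsupp.mem_range_mapDomain_iff _ (simplicesMap_injective h q) c).trans ?_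
  simp only [hrange]

lemma chainMap_faceChain (h : K.faces ⊆ L.faces) (q : ℕ) (s : K.simplices (q + 1)) :
    chainMap K L h q (K.faceChain q s) = L.faceChain q (simplicesMap h (q + 1) s) := by
  rw [faceChain, map_sum]
  exact Finset.sum_congr rfl fun t _ => chainMap_single h q _ 1

lemma boundary_chainMap (h : K.faces ⊆ L.faces) (q : ℕ) (c : K.Chain (q + 1)) :
    L.boundary q (chainMap K L h (q + 1) c) = chainMap K L h q (K.boundary q c) := by
  induction c using Finsupp.induction_linear with
  | zero => simp
  | add c d hc hd => simp only [map_add, hc, hd]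
  | single s a => simp [chainMap_single, boundary, chainMap_faceChain]

lemma chainMap_mem_cycles_iff (h : K.faces ⊆ L.faces) (q : ℕ) (c : K.Chain q) :
    chainMap K L h q c ∈ L.cycles q ↔ c ∈ K.cycles q := by
  cases q with
  | zero => simp [cycles]
  | succ q =>
    simp only [cycles, LinearMap.mem_ker, boundary_chainMap]
    exact map_eq_zero_iff _ (chainMap_injective h q)

lemma hClass_eq_iff (q : ℕ) {c c' : K.Chain q} (hc : c ∈ K.cycles q) (hc' : c' ∈ K.cycles q) :
    K.hClass q c hc = K.hClass q c' hc' ↔ c - c' ∈ LinearMap.range (K.boundary q) :=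
  Submodule.Quotient.eq (K.boundariesIn q)

lemma mem_range_chainMap_of_chainMap_mem_range {A A' B B' : AbsSC α} {q : ℕ}
    (hAA' : A.faces ⊆ A'.faces) (hA'B' : A'.faces ⊆ B'.faces) (hBB' : B.faces ⊆ B'.faces)
    (hA : ∀ s ∈ A'.faces, s ∈ B.faces → s.card = q + 1 → s ∈ A.faces) {d : A'.Chain q}
    (hd : chainMap A' B' hA'B' q d ∈ LinearMap.range (chainMap B B' hBB' q)) :
    d ∈ LinearMap.range (chainMap A A' hAA' q) := by
  rw [mem_range_chainMap_iff] at hd ⊢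
  intro t htA
  by_cases htB : t.1 ∈ B.faces
  · exact absurd (hA t.1 t.2.1 htB t.2.2) htA
  · rw [← chainMap_apply_simplicesMap hA'B']
    exact hd _ htB

theorem mem_range_of_inducedHom_square {A A' B B' : AbsSC α} {q : ℕ}
    {φ : A.Homology q →ₗ[ZMod 2] B.Homology q} {ψ : A'.Homology q →ₗ[ZMod 2] B'.Homology q}
    {θ : B.Homology q →ₗ[ZMod 2] B'.Homology q}
    (hφ : InducedHom A B q φ) (hψ : InducedHom A' B' q ψ) (hθ : InducedHom B B' q θ)
    (hAA' : A.faces ⊆ A'.faces)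
    (hB' : ∀ s ∈ B'.faces, s.card = q + 2 → s ∈ B.faces)
    (hA : ∀ s ∈ A'.faces, s ∈ B.faces → s.card = q + 1 → s ∈ A.faces)
    {x : B.Homology q} (hx : θ x ∈ LinearMap.range ψ) : x ∈ LinearMap.range φ := by
  obtain ⟨hAB, hφ⟩ := hφ
  obtain ⟨hA'B', hψ⟩ := hψ
  obtain ⟨hBB', hθ⟩ := hθ
  obtain ⟨y, hy⟩ := hx
  obtain ⟨⟨c, hc⟩, rfl⟩ := Submodule.Quotient.mk_surjective _ x
  obtain ⟨⟨d, hd⟩, rfl⟩ := Submodule.Quotient.mk_surjective _ y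
  obtain ⟨_, hψd⟩ := hψ d hd
  obtain ⟨_, hθc⟩ := hθ c hc
  change ψ (A'.hClass q d hd) = θ (B.hClass q c hc) at hy
  rw [hψd, hθc, hClass_eq_iff] at hy
  obtain ⟨D, hD⟩ := hy
  obtain ⟨E, rfl⟩ : D ∈ LinearMap.range (chainMap B B' hBB' (q + 1)) :=
    (mem_range_chainMap_iff _ _ D).2 fun t ht => absurd (hB' t.1 t.2.1 t.2.2) ht
  rw [boundary_chainMap, eq_sub_iff_add_eq, ← map_add, eq_comm] at hD
  obtain ⟨e, rfl⟩ := mem_range_chainMap_of_chainMap_mem_range hAA' hA'B' hBB' hA ⟨_, hD.symm⟩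
  have he : e ∈ A.cycles q := (chainMap_mem_cycles_iff hAA' q e).1 hd
  have hAB_e : chainMap A B hAB q e = B.boundary q E + c := by
    apply chainMap_injective hBB'
    rw [chainMap_chainMap, ← hD, chainMap_chainMap]
  obtain ⟨_, hφe⟩ := hφ e he
  refine ⟨A.hClass q e he, hφe.trans ((hClass_eq_iff q _ hc).2 ⟨E, ?_⟩)⟩
  rw [hAB_e, add_sub_cancel_right]

end AbsSC

lemma comps_sub_one_succ {W : ℕ → Type} [∀ i, AddCommGroup (W i)] [∀ i, Module (ZMod 2) (W i)]
    (φ : ∀ i, W i →ₗ[ZMod 2] W (i + 1)) (m : ℕ) :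
    comps φ (Nat.sub_le (m + 1) 1) = φ m := by
  rw [comps, Nat.leRecOn_succ le_rfl, Nat.leRecOn_self]
  rfl

lemma Submodule.Quotient.injective_of_forall_apply_mem_imp_mem {R M N : Type*} [Ring R]
    [AddCommGroup M] [Module R M] [AddCommGroup N] [Module R N] {p : Submodule R M}
    {q : Submodule R N} {f : M →ₗ[R] N} (hf : ∀ x, f x ∈ q → x ∈ p) {Θ : (M ⧸ p) →ₗ[R] (N ⧸ q)}
    (hΘ : ∀ x, Θ (Submodule.Quotient.mk x) = Submodule.Quotient.mk (f x)) :
    Function.Injective Θ := by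
  refine (injective_iff_map_eq_zero Θ).2 fun x hx => ?_
  obtain ⟨x, rfl⟩ := Submodule.Quotient.mk_surjective p x
  rw [hΘ, Submodule.Quotient.mk_eq_zero] at hx
  exact (Submodule.Quotient.mk_eq_zero p).2 (hf x hx)

section Stars

variable {α : Type} [DecidableEq α] {k : ℕ} (P : Fin k → Set α) (z : Fin k → α)
  {s : Finset α}

lemma card_le_two_of_mem_starFaces (hs : s ∈ starFaces P z) : s.card ≤ 2 := by
  obtain ⟨j, rfl | ⟨v, -, rfl | rfl⟩⟩ := hs
  · simp
  · simp
  · exact Finset.card_le_two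

lemma notMem_faces_of_mem_starFaces {K : AbsSC α} (hz : ∀ j, z j ∉ K.vertexSet)
    (hs : s ∈ starFaces P z) (hcard : s.card = 2) : s ∉ K.faces := by
  obtain ⟨j, rfl | ⟨v, -, rfl | rfl⟩⟩ := hs
  · simp at hcard
  · simp at hcard
  · exact fun hK => hz j (K.down_closed hK (by simp) (by simp))

end Stars

theorem stmt14_general {α : Type} [DecidableEq α] (n k : ℕ)
    (K Kt : ℕ → AbsSC α)
    (hKt0 : (Kt 0).faces = ∅)
    (P : Fin k → Set α)
    (z : Fin k → α)
    (hznew : ∀ (j : Fin k) (i : ℕ), i ≤ n → z j ∉ (K i).vertexSet)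
    (hKt : ∀ i, 1 ≤ i → i ≤ n → (Kt i).faces = (K i).faces ∪ starFaces P z)
    (φ : ∀ i : ℕ, (K i).Homology 1 →ₗ[ZMod 2] (K (i + 1)).Homology 1)
    (ψ : ∀ i : ℕ, (Kt i).Homology 1 →ₗ[ZMod 2] (Kt (i + 1)).Homology 1)
    (θ : ∀ i : ℕ, (K i).Homology 1 →ₗ[ZMod 2] (Kt i).Homology 1)
    (hφ : ∀ i, i < n → AbsSC.InducedHom (K i) (K (i + 1)) 1 (φ i))
    (hψ : ∀ i, i < n → AbsSC.InducedHom (Kt i) (Kt (i + 1)) 1 (ψ i))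
    (hθ : ∀ i, i ≤ n → AbsSC.InducedHom (K i) (Kt i) 1 (θ i))
    (hsq : ∀ i, i < n → (θ (i + 1)).comp (φ i) = (ψ i).comp (θ i))
    (b : ℕ) (hb1 : 1 ≤ b) (hbn : b ≤ n) :
    (∀ s : (K b).Homology 1,
      θ b s ∈ LinearMap.range (comps ψ (Nat.sub_le b 1)) ↔
        s ∈ LinearMap.range (comps φ (Nat.sub_le b 1))) ∧
    (∀ Θ : ((K b).Homology 1 ⧸ LinearMap.range (comps φ (Nat.sub_le b 1))) →ₗ[ZMod 2]
        ((Kt b).Homology 1 ⧸ LinearMap.range (comps ψ (Nat.sub_le b 1))),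
      (∀ s : (K b).Homology 1,
        Θ (Submodule.Quotient.mk s) = Submodule.Quotient.mk (θ b s)) →
      Function.Injective Θ) := by
  obtain ⟨m, rfl⟩ : ∃ m, b = m + 1 := ⟨b - 1, by omega⟩
  rw [comps_sub_one_succ φ m, comps_sub_one_succ ψ m]
  have hKt_subset : (Kt m).faces ⊆ (K m).faces ∪ starFaces P z := by
    rcases m with _ | m
    · simp [hKt0]
    · exact (hKt (m + 1) (by omega) (by omega)).subset
  have hrange (s : (K (m + 1)).Homology 1) :
      θ (m + 1) s ∈ LinearMap.range (ψ m) ↔ s ∈ LinearMap.range (φ m) := by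
    refine ⟨AbsSC.mem_range_of_inducedHom_square (hφ m (by omega)) (hψ m (by omega))
      (hθ (m + 1) hbn) (hθ m (by omega)).1 ?_ ?_, ?_⟩
    · intro t ht hcard
      rw [hKt _ hb1 hbn] at ht
      exact ht.resolve_right fun hS => by
        have := card_le_two_of_mem_starFaces P z hS
        omega
    · intro t ht htK hcard
      exact (hKt_subset ht).resolve_right fun hS =>
        notMem_faces_of_mem_starFaces P z (fun j => hznew j (m + 1) hbn) hS hcard htK
    · rintro ⟨x, rfl⟩
      exact ⟨θ m x, (LinearMap.congr_fun (hsq m (by omega)) x).symm⟩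
  exact ⟨hrange, fun Θ hΘ =>
    Submodule.Quotient.injective_of_forall_apply_mem_imp_mem (fun s => (hrange s).1) hΘ⟩

/-- for every `s ∈ H_1(K_b)`, `θ_{1,b}(s) ∈ im ψ_{b-1}` if and only if
`s ∈ im φ_{b-1}`; consequently, the canonical `ℤ/2`-linear map
`H_1(K_b)/im φ_{b-1} → H_1(K̃_b)/im ψ_{b-1}` induced by `θ_{1,b}` is injective. -/
theorem stmt14 {α : Type} [DecidableEq α] (n k : ℕ)
    (K Kt : ℕ → AbsSC α)
    (hK0 : (K 0).faces = ∅)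
    (hKt0 : (Kt 0).faces = ∅)
    (hKmono : ∀ i, i < n → (K i).faces ⊆ (K (i + 1)).faces)
    (hKtmono : ∀ i, i < n → (Kt i).faces ⊆ (Kt (i + 1)).faces)
    (P : Fin k → Set α)
    (hPne : ∀ j, (P j).Nonempty)
    (hPdisj : Pairwise (Function.onFun Disjoint P))
    (hPunion : (⋃ j, P j) = (K 1).vertexSet)
    (z : Fin k → α)
    (hzinj : Function.Injective z)
    (hznew : ∀ (j : Fin k) (i : ℕ), i ≤ n → z j ∉ (K i).vertexSet)
    (hKt : ∀ i, 1 ≤ i → i ≤ n → (Kt i).faces = (K i).faces ∪ starFaces P z)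
    (φ : ∀ i : ℕ, (K i).Homology 1 →ₗ[ZMod 2] (K (i + 1)).Homology 1)
    (ψ : ∀ i : ℕ, (Kt i).Homology 1 →ₗ[ZMod 2] (Kt (i + 1)).Homology 1)
    (θ : ∀ i : ℕ, (K i).Homology 1 →ₗ[ZMod 2] (Kt i).Homology 1)
    (hφ : ∀ i, i < n → AbsSC.InducedHom (K i) (K (i + 1)) 1 (φ i))
    (hψ : ∀ i, i < n → AbsSC.InducedHom (Kt i) (Kt (i + 1)) 1 (ψ i))
    (hθ : ∀ i, i ≤ n → AbsSC.InducedHom (K i) (Kt i) 1 (θ i))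
    (hsq : ∀ i, i < n → (θ (i + 1)).comp (φ i) = (ψ i).comp (θ i))
    (b : ℕ) (hb1 : 1 ≤ b) (hbn : b ≤ n) :
    (∀ s : (K b).Homology 1,
      θ b s ∈ LinearMap.range (comps ψ (Nat.sub_le b 1)) ↔
        s ∈ LinearMap.range (comps φ (Nat.sub_le b 1))) ∧
    (∀ Θ : ((K b).Homology 1 ⧸ LinearMap.range (comps φ (Nat.sub_le b 1))) →ₗ[ZMod 2]
        ((Kt b).Homology 1 ⧸ LinearMap.range (comps ψ (Nat.sub_le b 1))),
      (∀ s : (K b).Homology 1,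
        Θ (Submodule.Quotient.mk s) = Submodule.Quotient.mk (θ b s)) →
      Function.Injective Θ) :=
  stmt14_general n k K Kt hKt0 P z hznew hKt φ ψ θ hφ hψ hθ hsq b hb1 hbn
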